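/- arXiv:2305.10978 — 2 statements merged into one kernel-verified Lean document; each statement's English description precedes it below -/
import Mathlib

section
/- For any two finite MDPs sharing the same state space S, action space A, reward function R bounded in [0, R_max], and discount factor γ ∈ (0,1), but with transition kernels P_m and P_n, and for any value function V with sup-norm at most R_max/(1-γ), the sup-norm distance between the Bellman optimality operators applied to V satisfies ‖T_m V − T_n V‖_∞ ≤ γ R_max κ_{m,n} / (1 − γ), where κ_{m,n} = max over policies π and states s of ∑_{s'} |P_m^π(s'|s) − P_n^π(s'|s)| and P^π(s'|s) = ∑_a π(a|s) P(s'|s,a). -/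
open Finset Filter

variable {S A : Type*}

/-- A stochastic policy: for each state, a probability distribution over actions. -/
def IsPolicy [Fintype A] (pi : S → A → ℝ) : Prop :=
  (∀ s a, 0 ≤ pi s a) ∧ ∀ s, ∑ a, pi s a = 1

/-- A transition kernel: for each state-action pair, a probability distribution over states. -/
def IsKernel [Fintype S] (P : S → A → S → ℝ) : Prop :=
  (∀ s a s', 0 ≤ P s a s') ∧ ∀ s a, ∑ s', P s a s' = 1

/-- The policy Bellman operator `T^π` for kernel `P`. -/
def Tpol [Fintype S] [Fintype A] (γ : ℝ) (R : S → A → ℝ) (P : S → A → S → ℝ)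
    (pi : S → A → ℝ) (V : S → ℝ) (s : S) : ℝ :=
  ∑ a, pi s a * (R s a + γ * ∑ s', P s a s' * V s')

/-- The Bellman optimality operator `T` for kernel `P`. -/
noncomputable def Topt [Fintype S] [Fintype A] [Nonempty A] (γ : ℝ) (R : S → A → ℝ)
    (P : S → A → S → ℝ) (V : S → ℝ) (s : S) : ℝ :=
  Finset.univ.sup' Finset.univ_nonempty fun a => R s a + γ * ∑ s', P s a s' * V s'

/-- Heterogeneity measure `κ_{m,n}`: the supremum over policies `π` and states `s` of the
ℓ¹-distance between the induced state transition kernels `P_m^π(·|s)` and `P_n^π(·|s)`. -/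
noncomputable def kappa [Fintype S] [Fintype A] (Pm Pn : S → A → S → ℝ) : ℝ :=
  sSup {x : ℝ | ∃ pi : S → A → ℝ, ∃ s : S, IsPolicy pi ∧
    x = ∑ s', |(∑ a, pi s a * Pm s a s') - ∑ a, pi s a * Pn s a s'|}

/-- Sup-norm of a value function on a finite state space. -/
noncomputable def supNorm [Fintype S] [Nonempty S] (V : S → ℝ) : ℝ := ⨆ s, |V s|

/-! Bellman's optimality operator is a maximum over actions, and the maximum is 1-Lipschitz for
the sup norm, so it suffices to compare the two one-step backups action by action. For a fixed
action `a` these differ by `γ ∑ s', (P_m - P_n)(s'|s,a) V s'`, which Hölder bounds by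
`γ ‖P_m(·|s,a) - P_n(·|s,a)‖₁ ‖V‖_∞`; the deterministic policy choosing `a` shows that this
ℓ¹-distance is at most `κ_{m,n}`. -/

theorem IsPolicy.le_one [Fintype A] {pi : S → A → ℝ} (hpi : IsPolicy pi) (s : S) (a : A) :
    pi s a ≤ 1 :=
  hpi.2 s ▸ single_le_sum (fun b _ => hpi.1 s b) (mem_univ a)

theorem bddAbove_kappa_set [Fintype S] [Fintype A] (Pm Pn : S → A → S → ℝ) :
    BddAbove {x : ℝ | ∃ pi : S → A → ℝ, ∃ s : S, IsPolicy pi ∧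
      x = ∑ s', |(∑ a, pi s a * Pm s a s') - ∑ a, pi s a * Pn s a s'|} := by
  refine ⟨∑ s, ∑ s', ∑ a, |Pm s a s' - Pn s a s'|, ?_⟩
  rintro x ⟨pi, s, hpi, rfl⟩
  calc ∑ s', |(∑ a, pi s a * Pm s a s') - ∑ a, pi s a * Pn s a s'|
      ≤ ∑ s', ∑ a, |Pm s a s' - Pn s a s'| := by
        refine sum_le_sum fun s' _ => ?_
        rw [← sum_sub_distrib]
        refine (abs_sum_le_sum_abs _ _).trans (sum_le_sum fun a _ => ?_)
        rw [← mul_sub, abs_mul, abs_of_nonneg (hpi.1 s a)]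
        exact mul_le_of_le_one_left (abs_nonneg _) (hpi.le_one s a)
    _ ≤ ∑ s, ∑ s', ∑ a, |Pm s a s' - Pn s a s'| :=
        single_le_sum (f := fun s => ∑ s', ∑ a, |Pm s a s' - Pn s a s'|)
          (fun _ _ => by positivity) (mem_univ s)

theorem sum_abs_sub_le_kappa [Fintype S] [Fintype A] (Pm Pn : S → A → S → ℝ) (s : S) (a : A) :
    ∑ s', |Pm s a s' - Pn s a s'| ≤ kappa Pm Pn := by
  classical
  refine le_csSup (bddAbove_kappa_set Pm Pn)
    ⟨fun _ b => if b = a then 1 else 0, s, ⟨fun _ _ => by positivity, fun _ => by simp⟩,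
      by simp [ite_mul]⟩

theorem kappa_nonneg [Fintype S] [Fintype A] [Nonempty S] [Nonempty A]
    (Pm Pn : S → A → S → ℝ) : 0 ≤ kappa Pm Pn :=
  (sum_nonneg fun _ _ => abs_nonneg _).trans
    (sum_abs_sub_le_kappa Pm Pn (Classical.arbitrary S) (Classical.arbitrary A))

theorem abs_le_supNorm [Fintype S] [Nonempty S] (V : S → ℝ) (s : S) : |V s| ≤ supNorm V :=
  le_ciSup (f := fun s => |V s|) (Set.finite_range _).bddAbove s

theorem supNorm_le [Fintype S] [Nonempty S] {V : S → ℝ} {C : ℝ} (h : ∀ s, |V s| ≤ C) :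
    supNorm V ≤ C :=
  ciSup_le h

theorem abs_sum_mul_sub_sum_mul_le [Fintype S] [Nonempty S] (p q V : S → ℝ) :
    |∑ s, p s * V s - ∑ s, q s * V s| ≤ (∑ s, |p s - q s|) * supNorm V := by
  rw [← sum_sub_distrib, sum_mul]
  refine (abs_sum_le_sum_abs _ _).trans (sum_le_sum fun s _ => ?_)
  rw [← sub_mul, abs_mul]
  exact mul_le_mul_of_nonneg_left (abs_le_supNorm V s) (abs_nonneg _)

section Sup'

variable {ι α : Type*} [AddCommGroup α] [LinearOrder α] [IsOrderedAddMonoid α]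
  {s : Finset ι} (hs : s.Nonempty) {f g : ι → α} {C : α}

include hs in
theorem Finset.sup'_le_add_sup'_of_sub_le (h : ∀ i ∈ s, f i - g i ≤ C) :
    s.sup' hs f ≤ C + s.sup' hs g :=
  sup'_le _ _ fun i hi =>
    (sub_le_iff_le_add.1 (h i hi)).trans ((add_le_add_iff_left C).2 (le_sup' g hi))

theorem Finset.abs_sup'_sub_sup'_le (h : ∀ i ∈ s, |f i - g i| ≤ C) :
    |s.sup' hs f - s.sup' hs g| ≤ C :=
  abs_sub_le_iff.2
    ⟨sub_le_iff_le_add.2 <| sup'_le_add_sup'_of_sub_le hs fun i hi => (abs_sub_le_iff.1 (h i hi)).1,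
     sub_le_iff_le_add.2 <| sup'_le_add_sup'_of_sub_le hs fun i hi => (abs_sub_le_iff.1 (h i hi)).2⟩

end Sup'

variable [Fintype S] [Fintype A] [Nonempty S] [Nonempty A]

theorem abs_Topt_sub_Topt_le {γ : ℝ} (hγ : 0 ≤ γ) (R : S → A → ℝ) (Pm Pn : S → A → S → ℝ)
    (V : S → ℝ) (s : S) :
    |Topt γ R Pm V s - Topt γ R Pn V s| ≤ γ * (kappa Pm Pn * supNorm V) := by
  refine abs_sup'_sub_sup'_le _ fun a _ => ?_
  calc |(R s a + γ * ∑ s', Pm s a s' * V s') - (R s a + γ * ∑ s', Pn s a s' * V s')|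
      = γ * |∑ s', Pm s a s' * V s' - ∑ s', Pn s a s' * V s'| := by
        rw [add_sub_add_left_eq_sub, ← mul_sub, abs_mul, abs_of_nonneg hγ]
    _ ≤ γ * (kappa Pm Pn * supNorm V) := by
        gcongr
        exact (abs_sum_mul_sub_sum_mul_le _ _ V).trans <| mul_le_mul_of_nonneg_right
          (sum_abs_sub_le_kappa Pm Pn s a) ((abs_nonneg _).trans (abs_le_supNorm V s))

theorem stmt0_general (γ Rmax : ℝ) (hγ0 : 0 < γ)
    (R : S → A → ℝ)
    (Pm Pn : S → A → S → ℝ)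
    (V : S → ℝ) (hV : supNorm V ≤ Rmax / (1 - γ)) :
    supNorm (fun s => Topt γ R Pm V s - Topt γ R Pn V s) ≤
      γ * Rmax * kappa Pm Pn / (1 - γ) := by
  refine supNorm_le fun s => (abs_Topt_sub_Topt_le hγ0.le R Pm Pn V s).trans ?_
  calc γ * (kappa Pm Pn * supNorm V) ≤ γ * (kappa Pm Pn * (Rmax / (1 - γ))) := by
        gcongr
        exact kappa_nonneg Pm Pn
    _ = γ * Rmax * kappa Pm Pn / (1 - γ) := by ring

theorem stmt0 (γ Rmax : ℝ) (hγ0 : 0 < γ) (hγ1 : γ < 1)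
    (R : S → A → ℝ) (hR : ∀ s a, 0 ≤ R s a ∧ R s a ≤ Rmax)
    (Pm Pn : S → A → S → ℝ) (hPm : IsKernel Pm) (hPn : IsKernel Pn)
    (V : S → ℝ) (hV : supNorm V ≤ Rmax / (1 - γ)) :
    supNorm (fun s => Topt γ R Pm V s - Topt γ R Pn V s) ≤
      γ * Rmax * kappa Pm Pn / (1 - γ) :=
  stmt0_general γ Rmax hγ0 R Pm Pn V hV
end

section
/- (Error bound for federated policy improvement without federated policy evaluation.) Suppose each client n computes a local value estimate V^t_n with ‖V^t_n − V^{π^t}_n‖_∞ ≤ δ_n and a local policy π^{t+1}_n with ‖T^{π^{t+1}_n}_n V^t_n − T_n V^t_n‖_∞ ≤ ε_n, all value functions and estimates bounded by R_max/(1−γ); let V̄^t = ∑_n q_n V^t_n and π^{t+1} = ∑_n q_n π^{t+1}_n. Then ‖T^{π^{t+1}}_I V̄^t − T_I V̄^t‖_∞ ≤ 2γ² R_max κ_2/(1−γ)² + γ R_max κ_1/(1−γ) + 4γ δ̄ + ε̄, where κ_1 = ∑_n q_n κ_{n,I}, κ_2 = ∑_{i,j} q_i q_j κ_{i,j}, δ̄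 = ∑_n q_n δ_n, ε̄ = ∑_n q_n ε_n. -/
open Finset Filter

variable {S A : Type*}

/-!
The aggregated policy is evaluated against the averaged kernel `P̄`. Since the optimality
operator is convex in the kernel and the policy operator is linear in the policy,
`T_I V̄ - T_I^π V̄ ≤ ∑ q_n (T_n V̄ - T_I^{π_n} V̄)`. Each summand is bounded by passing from
`V̄` to the client's own estimate `V_n` (two contraction steps), using the client's greedy
error `ε_n`, and changing kernel from `P_n` to `P̄` at cost `γ κ_{n,I} ‖V̄‖`. Finally
`‖V̄ - V_n‖ ≤ ∑_j q_j (δ_j + δ_n + ‖V^π_j - V^π_n‖)`, and by the simulation lemma the true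
values of the common policy under two kernels differ by at most `γ R_max κ / (1 - γ)²`.
-/

section StochasticWeights

variable {ι : Type*} [Fintype ι]

theorem abs_le_norm_pi (V : ι → ℝ) (i : ι) : |V i| ≤ ‖V‖ :=
  norm_le_pi_norm V i

theorem abs_sum_mul_le_sum_abs_mul {w f : ι → ℝ} {c : ℝ} (hf : ∀ i, |f i| ≤ c) :
    |∑ i, w i * f i| ≤ (∑ i, |w i|) * c :=
  calc |∑ i, w i * f i| ≤ ∑ i, |w i| * |f i| := by
        simpa only [abs_mul] using abs_sum_le_sum_abs (fun i => w i * f i) univ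
    _ ≤ ∑ i, |w i| * c := by gcongr with i; exact hf i
    _ = (∑ i, |w i|) * c := (sum_mul ..).symm

theorem abs_sum_mul_le_of_stochastic {w f : ι → ℝ} {c : ℝ} (hw0 : ∀ i, 0 ≤ w i)
    (hw1 : ∑ i, w i = 1) (hf : ∀ i, |f i| ≤ c) : |∑ i, w i * f i| ≤ c := by
  simpa only [abs_of_nonneg (hw0 _), hw1, one_mul] using abs_sum_mul_le_sum_abs_mul (w := w) hf

theorem sum_mul_le_of_stochastic {w f : ι → ℝ} {c : ℝ} (hw0 : ∀ i, 0 ≤ w i)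
    (hw1 : ∑ i, w i = 1) (hf : ∀ i, f i ≤ c) : ∑ i, w i * f i ≤ c :=
  calc ∑ i, w i * f i ≤ ∑ i, w i * c := by gcongr with i; exacts [hw0 i, hf i]
    _ = c := by rw [← sum_mul, hw1, one_mul]

theorem sum_sum_mul_eq_one {κ : Type*} [Fintype κ] {q : κ → ℝ} {p : κ → ι → ℝ}
    (hq1 : ∑ n, q n = 1) (hp1 : ∀ n, ∑ i, p n i = 1) : ∑ i, ∑ n, q n * p n i = 1 := by
  rw [sum_comm]
  simp only [← mul_sum, hp1, mul_one, hq1]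

end StochasticWeights

theorem norm_sum_smul_sub_le {κ E : Type*} [Fintype κ] [SeminormedAddCommGroup E]
    [NormedSpace ℝ E] {q : κ → ℝ} (hq0 : ∀ n, 0 ≤ q n) (hq1 : ∑ n, q n = 1) (x : κ → E) (y : E) :
    ‖(∑ n, q n • x n) - y‖ ≤ ∑ n, q n * ‖x n - y‖ := by
  have hy : y = ∑ n, q n • y := by rw [← sum_smul, hq1, one_smul]
  calc ‖(∑ n, q n • x n) - y‖ = ‖∑ n, q n • (x n - y)‖ := by
        conv_lhs => rw [hy]
        simp only [smul_sub, sum_sub_distrib]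
    _ ≤ ∑ n, ‖q n • (x n - y)‖ := norm_sum_le _ _
    _ = ∑ n, q n * ‖x n - y‖ := by simp only [norm_smul, Real.norm_of_nonneg (hq0 _)]

theorem le_div_one_sub_of_le_add_mul {x a γ : ℝ} (hγ1 : γ < 1) (h : x ≤ a + γ * x) :
    x ≤ a / (1 - γ) := by
  rw [le_div_iff₀ (sub_pos.mpr hγ1)]
  linarith

theorem supNorm_eq_norm [Fintype S] [Nonempty S] (V : S → ℝ) : supNorm V = ‖V‖ :=
  le_antisymm (ciSup_le fun s => norm_le_pi_norm V s)
    ((pi_norm_le_iff_of_nonempty V).mpr fun s =>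
      le_ciSup (Set.finite_range fun s => |V s|).bddAbove s)

section Mixture

variable {κ : Type*} [Fintype κ] {q : κ → ℝ}

theorem IsPolicy.mixture [Fintype A] (hq0 : ∀ n, 0 ≤ q n) (hq1 : ∑ n, q n = 1)
    {pi : κ → S → A → ℝ} (hpi : ∀ n, IsPolicy (pi n)) :
    IsPolicy (fun s a => ∑ n, q n * pi n s a) :=
  ⟨fun s a => sum_nonneg fun n _ => mul_nonneg (hq0 n) ((hpi n).1 s a),
    fun s => sum_sum_mul_eq_one hq1 fun n => (hpi n).2 s⟩

theorem IsKernel.mixture [Fintype S] (hq0 : ∀ n, 0 ≤ q n) (hq1 : ∑ n, q n = 1)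
    {P : κ → S → A → S → ℝ} (hP : ∀ n, IsKernel (P n)) :
    IsKernel (fun s a s' => ∑ n, q n * P n s a s') :=
  ⟨fun s a s' => sum_nonneg fun n _ => mul_nonneg (hq0 n) ((hP n).1 s a s'),
    fun s a => sum_sum_mul_eq_one hq1 fun n => (hP n).2 s a⟩

end Mixture

/-- The state-transition kernel `P^π` induced by the policy `π`. -/
def policyKernel [Fintype A] (P : S → A → S → ℝ) (pi : S → A → ℝ) (s s' : S) : ℝ :=
  ∑ a, pi s a * P s a s'

def qValue [Fintype S] (γ : ℝ) (R : S → A → ℝ) (P : S → A → S → ℝ) (V : S → ℝ) (s : S) (a : A) :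
    ℝ :=
  R s a + γ * ∑ s', P s a s' * V s'

section Bellman

variable [Fintype S] {γ : ℝ} {R : S → A → ℝ} {P : S → A → S → ℝ}

theorem qValue_sub_qValue (V W : S → ℝ) (s : S) (a : A) :
    qValue γ R P V s a - qValue γ R P W s a = γ * ∑ s', P s a s' * (V s' - W s') := by
  simp only [qValue, mul_sub, sum_sub_distrib]
  ring

theorem abs_qValue_sub_le (hP : IsKernel P) (hγ : 0 ≤ γ) (V W : S → ℝ) (s : S) (a : A) :
    |qValue γ R P V s a - qValue γ R P W s a| ≤ γ * ‖V - W‖ := by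
  rw [qValue_sub_qValue, abs_mul, abs_of_nonneg hγ]
  gcongr
  exact abs_sum_mul_le_of_stochastic (hP.1 s a) (hP.2 s a) (abs_le_norm_pi (V - W))

theorem abs_qValue_le {Rmax : ℝ} (hR : ∀ s a, |R s a| ≤ Rmax) (hP : IsKernel P) (hγ : 0 ≤ γ)
    (V : S → ℝ) (s : S) (a : A) : |qValue γ R P V s a| ≤ Rmax + γ * ‖V‖ := by
  refine (abs_add_le _ _).trans (add_le_add (hR s a) ?_)
  rw [abs_mul, abs_of_nonneg hγ]
  gcongr
  exact abs_sum_mul_le_of_stochastic (hP.1 s a) (hP.2 s a) (abs_le_norm_pi V)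

theorem qValue_mixture {κ : Type*} [Fintype κ] {q : κ → ℝ} (hq1 : ∑ n, q n = 1)
    (P : κ → S → A → S → ℝ) (V : S → ℝ) (s : S) (a : A) :
    qValue γ R (fun s a s' => ∑ n, q n * P n s a s') V s a =
      ∑ n, q n * qValue γ R (P n) V s a := by
  have hR : R s a = ∑ n, q n * R s a := by rw [← sum_mul, hq1, one_mul]
  unfold qValue
  nth_rewrite 1 [hR]
  simp only [mul_add, sum_add_distrib, mul_sum, sum_mul]
  rw [sum_comm (γ := S)]
  congr 1
  exact sum_congr rfl fun _ _ => sum_congr rfl fun _ _ => by ring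

variable [Fintype A] {pi : S → A → ℝ}

theorem IsKernel.policyKernel_nonneg (hP : IsKernel P) (hpi : IsPolicy pi) (s s' : S) :
    0 ≤ policyKernel P pi s s' :=
  sum_nonneg fun a _ => mul_nonneg (hpi.1 s a) (hP.1 s a s')

theorem IsKernel.sum_policyKernel (hP : IsKernel P) (hpi : IsPolicy pi) (s : S) :
    ∑ s', policyKernel P pi s s' = 1 := by
  unfold policyKernel
  rw [sum_comm]
  simp only [← mul_sum, hP.2, mul_one, hpi.2]

theorem sum_abs_policyKernel_sub_le_two {Q : S → A → S → ℝ} (hP : IsKernel P) (hQ : IsKernel Q)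
    (hpi : IsPolicy pi) (s : S) :
    ∑ s', |policyKernel P pi s s' - policyKernel Q pi s s'| ≤ 2 :=
  calc ∑ s', |policyKernel P pi s s' - policyKernel Q pi s s'|
      ≤ ∑ s', (policyKernel P pi s s' + policyKernel Q pi s s') := by
        gcongr with s'
        have := hP.policyKernel_nonneg hpi s s'
        have := hQ.policyKernel_nonneg hpi s s'
        exact abs_sub_le_iff.mpr ⟨by linarith, by linarith⟩
    _ = 2 := by rw [sum_add_distrib, hP.sum_policyKernel hpi, hQ.sum_policyKernel hpi]; norm_num

theorem le_kappa {Q : S → A → S → ℝ} (hP : IsKernel P) (hQ : IsKernel Q) (hpi : IsPolicy pi)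
    (s : S) : ∑ s', |policyKernel P pi s s' - policyKernel Q pi s s'| ≤ kappa P Q := by
  refine le_csSup ⟨2, ?_⟩ ⟨pi, s, hpi, rfl⟩
  rintro x ⟨pi', s', hpi', rfl⟩
  exact sum_abs_policyKernel_sub_le_two hP hQ hpi' s'

theorem kappa_nonneg_s9 [Nonempty S] [Nonempty A] {Q : S → A → S → ℝ} (hP : IsKernel P)
    (hQ : IsKernel Q) : 0 ≤ kappa P Q := by
  have huniform : IsPolicy fun (_ : S) (_ : A) => (Fintype.card A : ℝ)⁻¹ :=
    ⟨fun _ _ => by positivity, fun _ => by simp⟩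
  exact (sum_nonneg fun _ _ => abs_nonneg _).trans
    (le_kappa hP hQ huniform (Classical.arbitrary S))

theorem Tpol_eq_sum_qValue (V : S → ℝ) (s : S) :
    Tpol γ R P pi V s = ∑ a, pi s a * qValue γ R P V s a :=
  rfl

theorem Tpol_eq_add_policyKernel (V : S → ℝ) (s : S) :
    Tpol γ R P pi V s = ∑ a, pi s a * R s a + γ * ∑ s', policyKernel P pi s s' * V s' := by
  simp only [Tpol, policyKernel, mul_add, sum_add_distrib, mul_sum, sum_mul]
  rw [sum_comm (γ := S)]
  congr 1
  exact sum_congr rfl fun _ _ => sum_congr rfl fun _ _ => by ring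

theorem abs_Tpol_sub_le (hP : IsKernel P) (hpi : IsPolicy pi) (hγ : 0 ≤ γ) (V W : S → ℝ)
    (s : S) : |Tpol γ R P pi V s - Tpol γ R P pi W s| ≤ γ * ‖V - W‖ := by
  simp only [Tpol_eq_sum_qValue, ← sum_sub_distrib, ← mul_sub]
  exact abs_sum_mul_le_of_stochastic (hpi.1 s) (hpi.2 s) (abs_qValue_sub_le hP hγ V W s)

theorem abs_Tpol_le {Rmax : ℝ} (hR : ∀ s a, |R s a| ≤ Rmax) (hP : IsKernel P)
    (hpi : IsPolicy pi) (hγ : 0 ≤ γ) (V : S → ℝ) (s : S) :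
    |Tpol γ R P pi V s| ≤ Rmax + γ * ‖V‖ :=
  abs_sum_mul_le_of_stochastic (hpi.1 s) (hpi.2 s) (abs_qValue_le hR hP hγ V s)

theorem abs_Tpol_sub_Tpol_le {Q : S → A → S → ℝ} (hP : IsKernel P) (hQ : IsKernel Q)
    (hpi : IsPolicy pi) (hγ : 0 ≤ γ) (V : S → ℝ) (s : S) :
    |Tpol γ R P pi V s - Tpol γ R Q pi V s| ≤ γ * kappa P Q * ‖V‖ := by
  have hdiff : Tpol γ R P pi V s - Tpol γ R Q pi V s =
      γ * ∑ s', (policyKernel P pi s s' - policyKernel Q pi s s') * V s' := by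
    simp only [Tpol_eq_add_policyKernel, sub_mul, sum_sub_distrib]
    ring
  rw [hdiff, abs_mul, abs_of_nonneg hγ, mul_assoc]
  gcongr
  exact (abs_sum_mul_le_sum_abs_mul (abs_le_norm_pi V)).trans
    (mul_le_mul_of_nonneg_right (le_kappa hP hQ hpi s) (norm_nonneg V))

theorem Tpol_mixture {κ : Type*} [Fintype κ] (q : κ → ℝ) (pi : κ → S → A → ℝ) (V : S → ℝ)
    (s : S) :
    Tpol γ R P (fun s a => ∑ n, q n * pi n s a) V s = ∑ n, q n * Tpol γ R P (pi n) V s := by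
  simp only [Tpol_eq_sum_qValue, sum_mul, mul_sum]
  rw [sum_comm]
  exact sum_congr rfl fun _ _ => sum_congr rfl fun _ _ => by ring

theorem norm_le_of_isFixedPt_Tpol [Nonempty S] {Rmax : ℝ} (hR : ∀ s a, |R s a| ≤ Rmax)
    (hP : IsKernel P) (hpi : IsPolicy pi) (hγ0 : 0 ≤ γ) (hγ1 : γ < 1) {V : S → ℝ}
    (hV : Function.IsFixedPt (Tpol γ R P pi) V) : ‖V‖ ≤ Rmax / (1 - γ) := by
  refine le_div_one_sub_of_le_add_mul hγ1 ((pi_norm_le_iff_of_nonempty V).mpr fun s => ?_)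
  rw [Real.norm_eq_abs, ← congrFun hV s]
  exact abs_Tpol_le hR hP hpi hγ0 V s

/-- The simulation lemma. -/
theorem norm_sub_le_of_isFixedPt_Tpol [Nonempty S] {Q : S → A → S → ℝ} (hP : IsKernel P)
    (hQ : IsKernel Q) (hpi : IsPolicy pi) (hγ0 : 0 ≤ γ) (hγ1 : γ < 1) {V W : S → ℝ}
    (hV : Function.IsFixedPt (Tpol γ R P pi) V) (hW : Function.IsFixedPt (Tpol γ R Q pi) W) :
    ‖V - W‖ ≤ γ * kappa P Q * ‖V‖ / (1 - γ) := by
  refine le_div_one_sub_of_le_add_mul hγ1 ((pi_norm_le_iff_of_nonempty _).mpr fun s => ?_)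
  have hkernel := abs_Tpol_sub_Tpol_le hP hQ hpi hγ0 V s (R := R)
  have hvalue := abs_Tpol_sub_le hQ hpi hγ0 V W s (R := R)
  rw [congrFun hV s, congrFun hW s] at *
  rw [Real.norm_eq_abs, Pi.sub_apply, abs_le] at *
  constructor <;> linarith

theorem norm_sub_le_kappa_of_isFixedPt_Tpol [Nonempty S] [Nonempty A] {Rmax : ℝ}
    (hR : ∀ s a, |R s a| ≤ Rmax) {Q : S → A → S → ℝ} (hP : IsKernel P) (hQ : IsKernel Q)
    (hpi : IsPolicy pi) (hγ0 : 0 ≤ γ) (hγ1 : γ < 1) {V W : S → ℝ}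
    (hV : Function.IsFixedPt (Tpol γ R P pi) V) (hW : Function.IsFixedPt (Tpol γ R Q pi) W) :
    ‖V - W‖ ≤ γ * Rmax / (1 - γ) ^ 2 * kappa P Q :=
  calc ‖V - W‖ ≤ γ * kappa P Q * ‖V‖ / (1 - γ) :=
        norm_sub_le_of_isFixedPt_Tpol hP hQ hpi hγ0 hγ1 hV hW
    _ ≤ γ * kappa P Q * (Rmax / (1 - γ)) / (1 - γ) := by
        have := kappa_nonneg_s9 hP hQ
        have := sub_pos.mpr hγ1
        gcongr
        exact norm_le_of_isFixedPt_Tpol hR hP hpi hγ0 hγ1 hV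
    _ = γ * Rmax / (1 - γ) ^ 2 * kappa P Q := by field_simp

theorem Topt_eq_sup'_qValue [Nonempty A] (V : S → ℝ) (s : S) :
    Topt γ R P V s = univ.sup' univ_nonempty (qValue γ R P V s) :=
  rfl

theorem Tpol_le_Topt [Nonempty A] (hpi : IsPolicy pi) (V : S → ℝ) (s : S) :
    Tpol γ R P pi V s ≤ Topt γ R P V s :=
  sum_mul_le_of_stochastic (hpi.1 s) (hpi.2 s) fun a => le_sup' (qValue γ R P V s) (mem_univ a)

theorem Topt_sub_Topt_le [Nonempty A] (hP : IsKernel P) (hγ : 0 ≤ γ) (V W : S → ℝ) (s : S) :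
    Topt γ R P V s - Topt γ R P W s ≤ γ * ‖V - W‖ := by
  rw [sub_le_iff_le_add', Topt_eq_sup'_qValue]
  refine sup'_le _ _ fun a _ => ?_
  calc qValue γ R P V s a ≤ qValue γ R P W s a + γ * ‖V - W‖ := by
        linarith [(abs_le.mp (abs_qValue_sub_le hP hγ V W s a (R := R))).2]
    _ ≤ Topt γ R P W s + γ * ‖V - W‖ := by gcongr; exact le_sup' (qValue γ R P W s) (mem_univ a)

theorem Topt_sub_Tpol_le [Nonempty A] {Q : S → A → S → ℝ} (hP : IsKernel P) (hQ : IsKernel Q)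
    (hpi : IsPolicy pi) (hγ : 0 ≤ γ) (V W : S → ℝ) (s : S) :
    Topt γ R P V s - Tpol γ R Q pi V s ≤
      (Topt γ R P W s - Tpol γ R P pi W s) + 2 * γ * ‖V - W‖ + γ * kappa P Q * ‖V‖ := by
  have hopt := Topt_sub_Topt_le hP hγ V W s (R := R)
  have hpol := abs_Tpol_sub_le hP hpi hγ W V s (R := R)
  have hkernel := abs_Tpol_sub_Tpol_le hP hQ hpi hγ V s (R := R)
  rw [norm_sub_rev] at hpol
  linarith [(abs_le.mp hpol).2, (abs_le.mp hkernel).2]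

theorem Topt_mixture_le [Nonempty A] {κ : Type*} [Fintype κ] {q : κ → ℝ} (hq0 : ∀ n, 0 ≤ q n)
    (hq1 : ∑ n, q n = 1) (P : κ → S → A → S → ℝ) (V : S → ℝ) (s : S) :
    Topt γ R (fun s a s' => ∑ n, q n * P n s a s') V s ≤ ∑ n, q n * Topt γ R (P n) V s := by
  rw [Topt_eq_sup'_qValue]
  refine sup'_le _ _ fun a _ => ?_
  rw [qValue_mixture hq1]
  exact sum_le_sum fun n _ => mul_le_mul_of_nonneg_left (le_sup' _ (mem_univ a)) (hq0 n)

theorem norm_Tpol_sub_Topt_mixture_le [Nonempty S] [Nonempty A] {κ : Type*} [Fintype κ]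
    {q : κ → ℝ} (hq0 : ∀ n, 0 ≤ q n) (hq1 : ∑ n, q n = 1) {P : κ → S → A → S → ℝ}
    (hP : ∀ n, IsKernel (P n)) {Pbar : S → A → S → ℝ}
    (hPbar : ∀ s a s', Pbar s a s' = ∑ n, q n * P n s a s') {pi : κ → S → A → ℝ}
    (hpi : ∀ n, IsPolicy (pi n)) {piagg : S → A → ℝ}
    (hpiagg : ∀ s a, piagg s a = ∑ n, q n * pi n s a) (hγ : 0 ≤ γ) {V : S → ℝ} {W : κ → S → ℝ}
    {ε d : κ → ℝ} {C : ℝ}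
    (hε : ∀ n, ‖fun s => Tpol γ R (P n) (pi n) (W n) s - Topt γ R (P n) (W n) s‖ ≤ ε n)
    (hd : ∀ n, ‖V - W n‖ ≤ d n) (hC : ‖V‖ ≤ C) :
    ‖fun s => Tpol γ R Pbar piagg V s - Topt γ R Pbar V s‖ ≤
      ∑ n, q n * (ε n + 2 * γ * d n + γ * C * kappa (P n) Pbar) := by
  have hPbar_eq : Pbar = fun s a s' => ∑ n, q n * P n s a s' := funext₃ hPbar
  have hPbarK : IsKernel Pbar := hPbar_eq ▸ IsKernel.mixture hq0 hq1 hP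
  obtain rfl : piagg = _ := funext₂ hpiagg
  refine (pi_norm_le_iff_of_nonempty _).mpr fun s => ?_
  have hmix : Topt γ R Pbar V s ≤ ∑ n, q n * Topt γ R (P n) V s := by
    rw [hPbar_eq]
    exact Topt_mixture_le hq0 hq1 P V s
  have hclient n : Topt γ R (P n) V s - Tpol γ R Pbar (pi n) V s ≤
      ε n + 2 * γ * d n + γ * C * kappa (P n) Pbar := by
    have hgreedy : Topt γ R (P n) (W n) s - Tpol γ R (P n) (pi n) (W n) s ≤ ε n :=
      neg_sub (Tpol γ R (P n) (pi n) (W n) s) _ ▸ (neg_le_abs _).trans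
        ((abs_le_norm_pi (fun s => Tpol γ R (P n) (pi n) (W n) s - Topt γ R (P n) (W n) s) s).trans
          (hε n))
    have hκ := kappa_nonneg_s9 (hP n) hPbarK
    have := Topt_sub_Tpol_le (hP n) hPbarK (hpi n) hγ V (W n) s (R := R)
    linarith [mul_le_mul_of_nonneg_left (hd n) hγ, mul_le_mul_of_nonneg_left hC (mul_nonneg hγ hκ)]
  rw [Real.norm_eq_abs, abs_sub_comm,
    abs_of_nonneg (sub_nonneg.mpr (Tpol_le_Topt (IsPolicy.mixture hq0 hq1 hpi) V s))]
  calc _ ≤ ∑ n, q n * Topt γ R (P n) V s - ∑ n, q n * Tpol γ R Pbar (pi n) V s := by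
        rw [Tpol_mixture]
        linarith
    _ = ∑ n, q n * (Topt γ R (P n) V s - Tpol γ R Pbar (pi n) V s) := by
        simp only [mul_sub, sum_sub_distrib]
    _ ≤ _ := by
        gcongr with n
        · exact hq0 n
        · exact hclient n

end Bellman

theorem sum_mul_client_bound_eq {κ : Type*} [Fintype κ] {q : κ → ℝ} (hq1 : ∑ n, q n = 1)
    (γ Rmax : ℝ) (δ ε kbar : κ → ℝ) (k : κ → κ → ℝ) :
    ∑ n, q n * (ε n + 2 * γ * ∑ j, q j * (δ j + δ n + γ * Rmax / (1 - γ) ^ 2 * k n j) +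
        γ * (Rmax / (1 - γ)) * kbar n) =
      2 * γ ^ 2 * Rmax * (∑ i, ∑ j, q i * q j * k i j) / (1 - γ) ^ 2 +
        γ * Rmax * (∑ n, q n * kbar n) / (1 - γ) + 4 * γ * (∑ n, q n * δ n) + ∑ n, q n * ε n := by
  have hpull (c : ℝ) (f : κ → ℝ) : ∑ n, q n * (c * f n) = c * ∑ n, q n * f n := by
    rw [mul_sum]
    exact sum_congr rfl fun _ _ => mul_left_comm _ _ _
  have hconst (c : ℝ) : ∑ n, q n * c = c := by rw [← sum_mul, hq1, one_mul]
  have hdouble : ∑ n, q n * ∑ j, q j * k n j = ∑ i, ∑ j, q i * q j * k i j := by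
    simp only [mul_sum, mul_assoc]
  simp only [mul_add, sum_add_distrib, hpull, hconst, hdouble]
  ring

variable [Fintype S] [Fintype A] [Nonempty S] [Nonempty A]

theorem stmt9 (N : ℕ) (γ Rmax : ℝ) (hγ0 : 0 < γ) (hγ1 : γ < 1)
    (R : S → A → ℝ) (hR : ∀ s a, 0 ≤ R s a ∧ R s a ≤ Rmax)
    (q : Fin N → ℝ) (hq0 : ∀ n, 0 ≤ q n) (hq1 : ∑ n, q n = 1)
    (P : Fin N → S → A → S → ℝ) (hP : ∀ n, IsKernel (P n))
    (Pbar : S → A → S → ℝ) (hPbar : ∀ s a s', Pbar s a s' = ∑ j, q j * P j s a s')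
    (pit : S → A → ℝ) (hpit : IsPolicy pit)
    (Vpi : Fin N → S → ℝ) (hVpi : ∀ n s, Vpi n s = Tpol γ R (P n) pit (Vpi n) s)
    (Vt : Fin N → S → ℝ) (δ : Fin N → ℝ)
    (hδ : ∀ n, supNorm (fun s => Vt n s - Vpi n s) ≤ δ n)
    (hVt : ∀ n, supNorm (Vt n) ≤ Rmax / (1 - γ))
    (pinext : Fin N → S → A → ℝ) (hpinext : ∀ n, IsPolicy (pinext n))
    (ε : Fin N → ℝ)
    (hε : ∀ n, supNorm (fun s => Tpol γ R (P n) (pinext n) (Vt n) s - Topt γ R (P n) (Vt n) s) ≤ ε n)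
    (Vbar : S → ℝ) (hVbar : ∀ s, Vbar s = ∑ n, q n * Vt n s)
    (piagg : S → A → ℝ) (hpiagg : ∀ s a, piagg s a = ∑ n, q n * pinext n s a) :
    supNorm (fun s => Tpol γ R Pbar piagg Vbar s - Topt γ R Pbar Vbar s) ≤
      2 * γ ^ 2 * Rmax * (∑ i, ∑ j, q i * q j * kappa (P i) (P j)) / (1 - γ) ^ 2 +
        γ * Rmax * (∑ n, q n * kappa (P n) Pbar) / (1 - γ) +
        4 * γ * (∑ n, q n * δ n) + ∑ n, q n * ε n := by
  have hγ : 0 ≤ γ := hγ0.le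
  have hRabs s a : |R s a| ≤ Rmax := (abs_of_nonneg (hR s a).1).trans_le (hR s a).2
  have hVbar_eq : Vbar = ∑ n, q n • Vt n := funext fun s => by simp [hVbar]
  simp only [supNorm_eq_norm] at hδ hVt hε ⊢
  replace hδ n : ‖Vt n - Vpi n‖ ≤ δ n := hδ n
  have hVpi_fixed n : Function.IsFixedPt (Tpol γ R (P n) pit) (Vpi n) :=
    funext fun s => (hVpi n s).symm
  have hVt_dist n j :
      ‖Vt j - Vt n‖ ≤ δ j + δ n + γ * Rmax / (1 - γ) ^ 2 * kappa (P n) (P j) := by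
    have hVpi_dist := norm_sub_le_kappa_of_isFixedPt_Tpol hRabs (hP n) (hP j) hpit hγ hγ1
      (hVpi_fixed n) (hVpi_fixed j)
    have := dist_triangle4_right (Vt j) (Vt n) (Vpi j) (Vpi n)
    rw [dist_comm (Vpi j), dist_eq_norm, dist_eq_norm, dist_eq_norm, dist_eq_norm] at this
    linarith [hδ j, hδ n]
  have hVbar_dist n :
      ‖Vbar - Vt n‖ ≤ ∑ j, q j * (δ j + δ n + γ * Rmax / (1 - γ) ^ 2 * kappa (P n) (P j)) :=
    hVbar_eq ▸ (norm_sum_smul_sub_le hq0 hq1 Vt (Vt n)).trans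
      (by gcongr with j; exacts [hq0 j, hVt_dist n j])
  have hVbar_norm : ‖Vbar‖ ≤ Rmax / (1 - γ) := by
    simpa [hVbar_eq] using (norm_sum_smul_sub_le hq0 hq1 Vt 0).trans
      (sum_mul_le_of_stochastic hq0 hq1 (by simpa using hVt))
  rw [← sum_mul_client_bound_eq hq1]
  exact norm_Tpol_sub_Topt_mixture_le hq0 hq1 hP hPbar hpinext hpiagg hγ hε hVbar_dist hVbar_norm
end
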